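/- Let X be a finite connected pre-ordered set, R a 2-torsion free commutative ring with unity, and L a Lie triple derivation of I(X,R) with coefficients C^{ij}_{xy}. Then C^{ij}_{ij} + C^{jk}_{jk} = C^{ik}_{ik} whenever i < j < k and i ≠ k. -/

import Mathlib

open IncidenceAlgebra
open scoped Classical

variable {R X : Type*}

/-- The matrix unit `e_{x y}` of the incidence algebra (zero if `¬ x ≤ y`). -/
noncomputable def matrixUnit [CommRing R] [Preorder X] [DecidableEq X] (x y : X) :
    IncidenceAlgebra R X :=
  ⟨fun u v => if u = x ∧ v = y ∧ x ≤ y then 1 else 0, fun a b hab => by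
    try dsimp only
    split_ifs with h
    · exact absurd (by rw [h.1, h.2.1]; exact h.2.2) hab
    · rfl⟩

/-- The Lie bracket `[f,g] = fg - gf`. -/
def lieBr {A : Type*} [Ring A] (f g : A) : A := f * g - g * f

/-- `L` is a Lie triple derivation of the incidence algebra. -/
def IsLieTripleDer [CommRing R] [Preorder X] [DecidableEq X] [LocallyFiniteOrder X]
    (L : IncidenceAlgebra R X →ₗ[R] IncidenceAlgebra R X) : Prop :=
  ∀ f g h : IncidenceAlgebra R X,
    L (lieBr (lieBr f g) h) =
      lieBr (lieBr (L f) g) h + lieBr (lieBr f (L g)) h + lieBr (lieBr f g) (L h)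

/-- `X` is connected: any two points are joined by a chain of comparabilities. -/
def OrdConnected' (X : Type*) [Preorder X] : Prop :=
  ∀ x y : X, Relation.ReflTransGen (fun a b : X => a ≤ b ∨ b ≤ a) x y

/-- `R` is 2-torsion free. -/
def TwoTorsionFree (R : Type*) [CommRing R] : Prop := ∀ r : R, r + r = 0 → r = 0

/-!
With `D = L e_ii`, the triple-derivation identity for `(e_ii, e_ij, e_jk)`, whose triple bracket
is `e_ik`, gives at entry `(i, k)`
`C^{ik}_{ik} = C^{ij}_{ij} + C^{jk}_{jk} + D_ii - D_jj`.
For `(e_ii, e_ij, e_ii)`, whose triple bracket is `-e_ij`, it gives `2 (D_ii - D_jj) = 0` at entry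
`(i, j)`, so the defect vanishes because `R` is 2-torsion free.
-/

open Finset

section MatrixUnit

variable [CommRing R] [Preorder X] [DecidableEq X]

lemma matrixUnit_apply (x y u v : X) :
    (matrixUnit x y : IncidenceAlgebra R X) u v = if u = x ∧ v = y ∧ x ≤ y then 1 else 0 :=
  rfl

variable [LocallyFiniteOrder X]

lemma mul_matrixUnit_apply (f : IncidenceAlgebra R X) (x y u v : X) :
    (f * matrixUnit x y : IncidenceAlgebra R X) u v = if v = y ∧ x ≤ y then f u x else 0 := by
  rw [mul_apply]
  split_ifs with h
  · obtain ⟨rfl, hxv⟩ := h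
    rw [sum_eq_single x (fun w _ hwx => by simp [matrixUnit_apply, hwx]) fun hx => ?_]
    · simp [matrixUnit_apply, hxv]
    have hux : ¬u ≤ x := fun hux => hx (mem_Icc.2 ⟨hux, hxv⟩)
    simp [apply_eq_zero_of_not_le hux]
  · exact sum_eq_zero fun w _ => by simp [matrixUnit_apply]; tauto

lemma matrixUnit_mul_apply (f : IncidenceAlgebra R X) (x y u v : X) :
    (matrixUnit x y * f : IncidenceAlgebra R X) u v = if u = x ∧ x ≤ y then f y v else 0 := by
  rw [mul_apply]
  split_ifs with h
  · obtain ⟨rfl, hux⟩ := h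
    rw [sum_eq_single y (fun w _ hwy => by simp [matrixUnit_apply, hwy]) fun hy => ?_]
    · simp [matrixUnit_apply, hux]
    have hyv : ¬y ≤ v := fun hyv => hy (mem_Icc.2 ⟨hux, hyv⟩)
    simp [apply_eq_zero_of_not_le hyv]
  · exact sum_eq_zero fun w _ => by simp [matrixUnit_apply]; tauto

lemma matrixUnit_mul_matrixUnit {x y z w : X} (hxy : x ≤ y) (hzw : z ≤ w) :
    (matrixUnit x y * matrixUnit z w : IncidenceAlgebra R X) =
      if y = z then matrixUnit x w else 0 := by
  ext u v
  rw [mul_matrixUnit_apply, matrixUnit_apply]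
  rcases eq_or_ne y z with rfl | hyz
  · simp [matrixUnit_apply, hxy, hzw, hxy.trans hzw, ite_and]
    split_ifs <;> rfl
  · simp [hyz, Ne.symm hyz]

end MatrixUnit

section LieBracket

variable [CommRing R] [Preorder X] [DecidableEq X] [LocallyFiniteOrder X]

lemma lieBr_matrixUnit_apply (f : IncidenceAlgebra R X) {x y : X} (hxy : x ≤ y) (u v : X) :
    lieBr f (matrixUnit x y) u v = (if v = y then f u x else 0) - (if u = x then f y v else 0) := by
  simp only [lieBr, IncidenceAlgebra.sub_apply, mul_matrixUnit_apply, matrixUnit_mul_apply, hxy,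
    and_true]

lemma matrixUnit_lieBr_apply (f : IncidenceAlgebra R X) {x y : X} (hxy : x ≤ y) (u v : X) :
    lieBr (matrixUnit x y) f u v = (if u = x then f y v else 0) - (if v = y then f u x else 0) := by
  simp only [lieBr, IncidenceAlgebra.sub_apply, mul_matrixUnit_apply, matrixUnit_mul_apply, hxy,
    and_true]

lemma lieBr_matrixUnit_self_left {i j : X} (hij : i ≤ j) (hne : i ≠ j) :
    lieBr (matrixUnit i i : IncidenceAlgebra R X) (matrixUnit i j) = matrixUnit i j := by
  simp [lieBr, matrixUnit_mul_matrixUnit, hij, hne.symm]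

lemma lieBr_matrixUnit_self_right {i j : X} (hij : i ≤ j) (hne : i ≠ j) :
    lieBr (matrixUnit i j : IncidenceAlgebra R X) (matrixUnit i i) = -matrixUnit i j := by
  simp [lieBr, matrixUnit_mul_matrixUnit, hij, hne.symm]

lemma lieBr_matrixUnit_matrixUnit {i j k : X} (hij : i ≤ j) (hjk : j ≤ k) (hik : i ≠ k) :
    lieBr (matrixUnit i j : IncidenceAlgebra R X) (matrixUnit j k) = matrixUnit i k := by
  simp [lieBr, matrixUnit_mul_matrixUnit, hij, hjk, hik.symm]

end LieBracket

namespace IsLieTripleDer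

variable [CommRing R] [Preorder X] [DecidableEq X] [LocallyFiniteOrder X]
  {L : IncidenceAlgebra R X →ₗ[R] IncidenceAlgebra R X}

lemma apply_diag_eq {i j : X} (hL : IsLieTripleDer L) (htf : TwoTorsionFree R) (hij : i ≤ j)
    (hne : i ≠ j) : L (matrixUnit i i) i i = L (matrixUnit i i) j j := by
  have h := congrArg (· i j) (hL (matrixUnit i i) (matrixUnit i j) (matrixUnit i i))
  simp only [lieBr_matrixUnit_self_left hij hne, lieBr_matrixUnit_self_right hij hne, map_neg,
    IncidenceAlgebra.neg_apply, IncidenceAlgebra.add_apply, lieBr_matrixUnit_apply _ le_rfl,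
    lieBr_matrixUnit_apply _ hij, matrixUnit_lieBr_apply _ le_rfl, matrixUnit_lieBr_apply _ hij,
    ↓reduceIte, if_neg hne, if_neg hne.symm] at h
  exact sub_eq_zero.1 (htf _ (by linear_combination h))

lemma apply_matrixUnit_of_le_of_le {i j k : X} (hL : IsLieTripleDer L) (hij : i ≤ j)
    (hjk : j ≤ k) (hij' : i ≠ j) (hjk' : j ≠ k) (hik : i ≠ k) :
    L (matrixUnit i k) i k = L (matrixUnit i i) i i - L (matrixUnit i i) j j
      + L (matrixUnit i j) i j + L (matrixUnit j k) j k := by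
  have h := congrArg (· i k) (hL (matrixUnit i i) (matrixUnit i j) (matrixUnit j k))
  simp only [lieBr_matrixUnit_self_left hij hij', lieBr_matrixUnit_matrixUnit hij hjk hik,
    IncidenceAlgebra.add_apply, lieBr_matrixUnit_apply _ hjk, lieBr_matrixUnit_apply _ hij,
    matrixUnit_lieBr_apply _ le_rfl, matrixUnit_lieBr_apply _ hij,
    ↓reduceIte, if_neg hij', if_neg hij'.symm, if_neg hjk'.symm, sub_zero] at h
  exact h

end IsLieTripleDer

theorem lieTripleDer_rel_R2_general [CommRing R] [Preorder X] [DecidableEq X]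
    [LocallyFiniteOrder X]
    (htf : TwoTorsionFree R)
    (L : IncidenceAlgebra R X →ₗ[R] IncidenceAlgebra R X) (hL : IsLieTripleDer L) :
    ∀ i j k : X, i ≤ j → j ≤ k → i ≠ j → j ≠ k → i ≠ k →
      L (matrixUnit i j) i j + L (matrixUnit j k) j k = L (matrixUnit i k) i k := by
  intro i j k hij hjk hij' hjk' hik
  rw [hL.apply_matrixUnit_of_le_of_le hij hjk hij' hjk' hik, hL.apply_diag_eq htf hij hij']
  ring

/-- relation (R2). `C^{ij}_{ij} + C^{jk}_{jk} = C^{ik}_{ik}` for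
`i < j < k` with `i ≠ k`. -/
theorem lieTripleDer_rel_R2 [CommRing R] [Preorder X] [DecidableEq X]
    [Fintype X] [LocallyFiniteOrder X]
    (htf : TwoTorsionFree R) (hconn : OrdConnected' X)
    (L : IncidenceAlgebra R X →ₗ[R] IncidenceAlgebra R X) (hL : IsLieTripleDer L) :
    ∀ i j k : X, i ≤ j → j ≤ k → i ≠ j → j ≠ k → i ≠ k →
      L (matrixUnit i j) i j + L (matrixUnit j k) j k = L (matrixUnit i k) i k :=
  lieTripleDer_rel_R2_general htf L hL
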